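/- Let s ∈ (0,1), p ∈ (1,∞) with sp > 1, and let γ : ℝ/ℤ → ℝ² be an injective Lipschitz closed curve with constant speed such that γ' ∈ W^{s,p}(ℝ/ℤ, ℝ²) and γ is C¹ and regular. Then the energy ∬_{(ℝ/ℤ)²} |γ'(t) − γ'(t')|^p / |γ(t) − γ(t')|^{1+sp} dt dt' is finite. -/

import Mathlib

/-!
An injective regular C¹ closed curve is bi-Lipschitz onto its image: near the diagonal the
difference quotient stays close to a tangent vector, which is bounded away from zero, and away
from the diagonal `‖γ t - γ t'‖` has a positive minimum by compactness and injectivity. Hence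
`‖γ t - γ t'‖ ≥ M · d(t, t')` for the intrinsic distance `d` on `ℝ/ℤ`, and the energy is bounded
by `M^{-(1+sp)}` times the `W^{s,p}` seminorm of `γ'`.
-/

open MeasureTheory Set Function

section

variable {E : Type*} [NormedAddCommGroup E] [NormedSpace ℝ E]

theorem sub_mul_abs_sub_le_norm_sub {f : ℝ → E} {a b ε : ℝ}
    (hf : ∀ x ∈ uIcc a b, DifferentiableAt ℝ f x)
    (hε : ∀ x ∈ uIcc a b, ‖deriv f x - deriv f b‖ ≤ ε) :
    (‖deriv f b‖ - ε) * |a - b| ≤ ‖f a - f b‖ := by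
  set g : ℝ → E := fun x => f x - x • deriv f b
  have hg : ∀ x ∈ uIcc a b, HasDerivAt g (deriv f x - deriv f b) x := fun x hx => by
    have := (hf x hx).hasDerivAt.fun_sub ((hasDerivAt_id' x).smul_const (deriv f b))
    rwa [one_smul] at this
  have hgab : ‖g a - g b‖ ≤ ε * ‖a - b‖ :=
    convex_uIcc a b |>.norm_image_sub_le_of_norm_hasDerivWithin_le
      (fun x hx => (hg x hx).hasDerivWithinAt) hε right_mem_uIcc left_mem_uIcc
  have hsplit : (a - b) • deriv f b = (f a - f b) - (g a - g b) := by
    simp only [g, sub_smul]; abel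
  calc (‖deriv f b‖ - ε) * |a - b| = ‖(a - b) • deriv f b‖ - ε * ‖a - b‖ := by
        rw [norm_smul, Real.norm_eq_abs]; ring
    _ ≤ ‖f a - f b‖ := by
        linarith [hsplit ▸ norm_sub_le (f a - f b) (g a - g b)]

theorem exists_pos_le_dist_of_le_dist {X Y : Type*} [PseudoMetricSpace X] [CompactSpace X]
    [MetricSpace Y] {g : X → Y} (hg : Continuous g) (hinj : Injective g) {δ : ℝ} (hδ : 0 < δ) :
    ∃ m > 0, ∀ x y, δ ≤ dist x y → m ≤ dist (g x) (g y) := by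
  have hS : IsCompact {p : X × X | δ ≤ dist p.1 p.2} :=
    (isClosed_le continuous_const continuous_dist).isCompact
  obtain ⟨m, hm, hmS⟩ := hS.exists_forall_le' (a := 0)
    ((hg.comp continuous_fst).dist (hg.comp continuous_snd)).continuousOn fun p hp =>
      dist_pos.mpr <| hinj.ne fun h => by rw [mem_ofPred_eq, h, dist_self] at hp; linarith
  exact ⟨m, hm, fun x y hxy => hmS (x, y) hxy⟩

namespace Function.Periodic

theorem deriv {f : ℝ → E} {c : ℝ} (hf : Periodic f c) : Periodic (deriv f) c := fun x => by
  rw [← deriv_comp_add_const, hf.funext]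

theorem apply_eq_of_coe_eq {α : Type*} {f : ℝ → α} {c : ℝ} (hf : Periodic f c) {a b : ℝ}
    (h : (a : AddCircle c) = b) : f a = f b := by
  rw [← hf.lift_coe a, ← hf.lift_coe b, h]

theorem uniformContinuous_of_continuous {α : Type*} [UniformSpace α] {f : ℝ → α} {c : ℝ}
    (hf : Periodic f c) (hc : 0 < c) (hcont : Continuous f) : UniformContinuous f :=
  haveI := Fact.mk hc
  (CompactSpace.uniformContinuous_of_continuous (f := hf.lift)
    (continuous_coinduced_dom.mpr hcont)).comp
    (AddSubgroup.zmultiples c).normedMk.uniformContinuous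

theorem injective_lift {α : Type*} {f : ℝ → α} {c : ℝ} (hf : Periodic f c)
    (hinj : ∀ a b : ℝ, f a = f b → (a : AddCircle c) = b) : Injective hf.lift := by
  rintro ⟨a⟩ ⟨b⟩ h
  exact hinj a b h

end Function.Periodic

theorem AddCircle.exists_dist_eq_abs_sub (T t t' : ℝ) :
    ∃ b : ℝ, (b : AddCircle T) = t' ∧ dist (t : AddCircle T) t' = |t - b| := by
  refine ⟨t' + round (T⁻¹ * (t - t')) * T, ?_, ?_⟩
  · simp [← zsmul_eq_mul]
  · rw [dist_eq_norm, ← AddCircle.coe_sub, AddCircle.norm_eq]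
    ring_nf

theorem exists_pos_mul_dist_le_norm_sub_of_periodic {γ : ℝ → E} {T : ℝ}
    (hper : Periodic γ T) (hT : 0 < T) (hC1 : ContDiff ℝ 1 γ) (hreg : ∀ t, deriv γ t ≠ 0)
    (hinj : ∀ a b : ℝ, γ a = γ b → (a : AddCircle T) = b) :
    ∃ M > 0, ∀ t t' : ℝ, M * dist (t : AddCircle T) t' ≤ ‖γ t - γ t'‖ := by
  have := Fact.mk hT
  have hγ' : Continuous (deriv γ) := hC1.continuous_deriv le_rfl
  obtain ⟨m, hm, hmγ'⟩ : ∃ m > 0, ∀ t, m ≤ ‖deriv γ t‖ := by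
    obtain ⟨m, hm, h⟩ := (hper.deriv.compact_of_continuous hT.ne' hγ').exists_forall_le' (a := 0)
      continuous_norm.continuousOn (by rintro _ ⟨t, rfl⟩; exact norm_pos_iff.mpr (hreg t))
    exact ⟨m, hm, fun t => h _ ⟨t, rfl⟩⟩
  obtain ⟨δ, hδ, hδγ'⟩ := Metric.uniformContinuous_iff.mp
    (hper.deriv.uniformContinuous_of_continuous hT hγ') (m / 2) (by positivity)
  obtain ⟨m', hm', hm'γ⟩ := exists_pos_le_dist_of_le_dist
    (continuous_coinduced_dom.mpr hC1.continuous : Continuous hper.lift)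
    (hper.injective_lift hinj) hδ
  refine ⟨min (m / 2) (m' / T), by positivity, fun t t' => ?_⟩
  rcases lt_or_ge (dist (t : AddCircle T) t') δ with hnear | hfar
  · -- `b` is the lift of `t'` nearest to `t`, so the mean value estimate runs over `[t, b]`.
    obtain ⟨b, hb, hdist⟩ := AddCircle.exists_dist_eq_abs_sub T t t'
    have hε : ∀ x ∈ uIcc t b, ‖deriv γ x - deriv γ b‖ ≤ m / 2 := fun x hx => by
      rw [← dist_eq_norm]
      refine (hδγ' ?_).le
      calc dist x b ≤ dist t b := Real.dist_le_of_mem_uIcc hx right_mem_uIcc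
        _ < δ := by rwa [Real.dist_eq, ← hdist]
    calc min (m / 2) (m' / T) * dist (t : AddCircle T) t'
        ≤ (‖deriv γ b‖ - m / 2) * |t - b| := by
          rw [hdist]; gcongr; linarith [min_le_left (m / 2) (m' / T), hmγ' b]
      _ ≤ ‖γ t - γ b‖ :=
          sub_mul_abs_sub_le_norm_sub (fun x _ => hC1.differentiable one_ne_zero x) hε
      _ = ‖γ t - γ t'‖ := by rw [hper.apply_eq_of_coe_eq hb]
  · have hdT : dist (t : AddCircle T) t' ≤ T := by
      rw [dist_eq_norm]
      linarith [AddCircle.norm_le_half_period T hT.ne' (x := (t : AddCircle T) - t'), abs_of_pos hT]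
    calc min (m / 2) (m' / T) * dist (t : AddCircle T) t' ≤ m' / T * T := by
          gcongr; exact min_le_right _ _
      _ = m' := by field_simp
      _ ≤ ‖γ t - γ t'‖ := by simpa only [hper.lift_coe, dist_eq_norm] using hm'γ _ _ hfar

end

theorem div_rpow_le_rpow_neg_mul_div {A r d M q : ℝ} (hA : 0 ≤ A) (hd : 0 ≤ d) (hM : 0 < M)
    (hq : 0 < q) (hMd : M * d ≤ r) (hA0 : d = 0 → A = 0) :
    A / r ^ q ≤ M ^ (-q) * (A / d ^ q) := by
  rcases hd.eq_or_lt with rfl | hd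
  · simp [hA0 rfl]
  calc A / r ^ q ≤ A / (M * d) ^ q := by gcongr
    _ = M ^ (-q) * (A / d ^ q) := by
      rw [Real.mul_rpow hM.le hd.le, Real.rpow_neg hM.le]; ring

theorem stmt_7_general (s p : ℝ) (hsp : 1 < s * p)
    (γ : ℝ → ℂ) (hper : Function.Periodic γ 1)
    (hC1 : ContDiff ℝ 1 γ) (hreg : ∀ t : ℝ, deriv γ t ≠ 0)
    (hinj : ∀ a b : ℝ, γ a = γ b → (a : AddCircle (1:ℝ)) = (b : ℝ))
    (hW : (∫⁻ t in Icc (0:ℝ) 1, ∫⁻ t' in Icc (0:ℝ) 1,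
        ENNReal.ofReal (‖deriv γ t - deriv γ t'‖ ^ p /
          (dist (t : AddCircle (1:ℝ)) (t' : ℝ)) ^ (1 + s * p))) ≠ ⊤) :
    (∫⁻ t in Icc (0:ℝ) 1, ∫⁻ t' in Icc (0:ℝ) 1,
        ENNReal.ofReal (‖deriv γ t - deriv γ t'‖ ^ p / ‖γ t - γ t'‖ ^ (1 + s * p))) ≠ ⊤ := by
  obtain ⟨M, hM, hMγ⟩ := exists_pos_mul_dist_le_norm_sub_of_periodic hper one_pos hC1 hreg hinj
  have hp : p ≠ 0 := by rintro rfl; linarith [mul_zero s]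
  refine ne_top_of_le_ne_top
    (ENNReal.mul_ne_top (ENNReal.ofReal_ne_top (r := M ^ (-(1 + s * p)))) hW) ?_
  rw [← lintegral_const_mul' _ _ ENNReal.ofReal_ne_top]
  refine lintegral_mono fun t => ?_
  rw [← lintegral_const_mul' _ _ ENNReal.ofReal_ne_top]
  refine lintegral_mono fun t' => ?_
  rw [← ENNReal.ofReal_mul (by positivity)]
  refine ENNReal.ofReal_le_ofReal <| div_rpow_le_rpow_neg_mul_div (by positivity) dist_nonneg hM
    (by linarith) (hMγ t t') fun hd => ?_
  rw [hper.deriv.apply_eq_of_coe_eq (dist_eq_zero.mp hd), sub_self, norm_zero, Real.zero_rpow hp]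

/-- converse: for s ∈ (0,1), p ∈ (1,∞), sp > 1, an injective (on ℝ/ℤ),
regular C¹, constant-speed Lipschitz closed curve with γ' ∈ W^{s,p}(ℝ/ℤ) has finite
tangent-oscillation energy. -/
theorem stmt_7 (s p : ℝ) (hs : s ∈ Ioo (0:ℝ) 1) (hp : 1 < p) (hsp : 1 < s * p)
    (γ : ℝ → ℂ) (hper : Function.Periodic γ 1)
    (K : NNReal) (hlip : LipschitzWith K γ)
    (hC1 : ContDiff ℝ 1 γ) (hreg : ∀ t : ℝ, deriv γ t ≠ 0)
    (c : ℝ) (hc : 0 < c) (hspeed : ∀ t : ℝ, ‖deriv γ t‖ = c)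
    (hinj : ∀ a b : ℝ, γ a = γ b → (a : AddCircle (1:ℝ)) = (b : ℝ))
    (hW : (∫⁻ t in Icc (0:ℝ) 1, ∫⁻ t' in Icc (0:ℝ) 1,
        ENNReal.ofReal (‖deriv γ t - deriv γ t'‖ ^ p /
          (dist (t : AddCircle (1:ℝ)) (t' : ℝ)) ^ (1 + s * p))) ≠ ⊤) :
    (∫⁻ t in Icc (0:ℝ) 1, ∫⁻ t' in Icc (0:ℝ) 1,
        ENNReal.ofReal (‖deriv γ t - deriv γ t'‖ ^ p / ‖γ t - γ t'‖ ^ (1 + s * p))) ≠ ⊤ :=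
  stmt_7_general s p hsp γ hper hC1 hreg hinj hW
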